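/- Vanishing identities for the right twist: if a, b ∈ ℤ satisfy a < b < π(a), then ⟨τ→(A)_a | A_b⟩ = 0 and ⟨τ→(A)_b | A_{π(a)}⟩ = 0. -/

import Mathlib

open scoped BigOperators

/-- The columns of `A` are `n`-periodic. -/
def ColPeriodic (k n : ℕ) (A : ℤ → Fin k → ℂ) : Prop :=
  ∀ a : ℤ, A (a + (n : ℤ)) = A a

/-- `A` has rank `k`, i.e. its columns span `ℂ^k`. -/
def FullRank (k : ℕ) (A : ℤ → Fin k → ℂ) : Prop :=
  Submodule.span ℂ (Set.range A) = ⊤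

/-- The Gale (componentwise) partial order on finite subsets of `ℤ` of equal
cardinality: `B ≼ C` iff they have the same cardinality and, for each `i`, the
`i`-th smallest element of `B` is at most the `i`-th smallest element of `C`
(equivalently, the counting condition below). -/
def galeLE (B C : Finset ℤ) : Prop :=
  B.card = C.card ∧
    ∀ t : ℤ, (B.filter fun x => t ≤ x).card ≤ (C.filter fun x => t ≤ x).card

/-- The columns of `A` indexed by `J` form a basis of `ℂ^k`. -/
def IsColBasis (k : ℕ) (A : ℤ → Fin k → ℂ) (J : Finset ℤ) : Prop :=
  J.card = k ∧ LinearIndependent ℂ (fun j : (J : Set ℤ) => A (j : ℤ)) ∧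
    Submodule.span ℂ (A '' (J : Set ℤ)) = ⊤

/-- `I` is the `≼_a`-minimal `k`-element subset of `{a, a+1, …, a+n-1}` whose
columns form a basis of `ℂ^k` (the `a`-minimal basis `I→_a`). -/
def IsMinBasis (k n : ℕ) (A : ℤ → Fin k → ℂ) (a : ℤ) (I : Finset ℤ) : Prop :=
  I ⊆ Finset.Ico a (a + (n : ℤ)) ∧ IsColBasis k A I ∧
    ∀ J : Finset ℤ, J ⊆ Finset.Ico a (a + (n : ℤ)) → IsColBasis k A J → galeLE I J

/-- `I` is the `≼_{a+1}`-maximal `k`-element subset of `{a-n+1, …, a}` whose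
columns form a basis of `ℂ^k` (the `a`-maximal basis `I←_a`).  Note that on
representatives in `{a-n+1, …, a}` the cyclic order `≺_{a+1}` agrees with the
usual order of `ℤ`. -/
def IsMaxBasis (k n : ℕ) (A : ℤ → Fin k → ℂ) (a : ℤ) (I : Finset ℤ) : Prop :=
  I ⊆ Finset.Ioc (a - (n : ℤ)) a ∧ IsColBasis k A I ∧
    ∀ J : Finset ℤ, J ⊆ Finset.Ioc (a - (n : ℤ)) a → IsColBasis k A J → galeLE J I

/-- The standard symmetric bilinear form `⟨x|y⟩ = ∑ i, x i * y i` on `ℂ^k`. -/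
noncomputable def bil (k : ℕ) (x y : Fin k → ℂ) : ℂ := ∑ i, x i * y i

/-- `π` is the bounded affine permutation of `A`:
`π a` is the least `r` with `a ≤ r ≤ a + n` and `A a ∈ span(A (a+1), …, A r)`. -/
def IsBAP (k n : ℕ) (A : ℤ → Fin k → ℂ) (π : ℤ → ℤ) : Prop :=
  ∀ a : ℤ,
    a ≤ π a ∧ π a ≤ a + (n : ℤ) ∧
    A a ∈ Submodule.span ℂ (A '' Set.Ioc a (π a)) ∧
    ∀ r : ℤ, a ≤ r → r ≤ a + (n : ℤ) →
      A a ∈ Submodule.span ℂ (A '' Set.Ioc a r) → π a ≤ r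

/-- `T` is the right twist `τ→(A)`: for each `a`, the column `T a` pairs to `1`
with `A a` and to `0` with the other columns of the `a`-minimal basis. -/
def IsRightTwist (k n : ℕ) (A T : ℤ → Fin k → ℂ) : Prop :=
  ∀ (a : ℤ) (I : Finset ℤ), IsMinBasis k n A a I →
    ∀ b ∈ I, bil k (T a) (A b) = if b = a then 1 else 0

/-- `T` is the left twist `τ←(A)`: for each `a`, the column `T a` pairs to `1`
with `A a` and to `0` with the other columns of the `a`-maximal basis. -/
def IsLeftTwist (k n : ℕ) (A T : ℤ → Fin k → ℂ) : Prop :=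
  ∀ (a : ℤ) (I : Finset ℤ), IsMaxBasis k n A a I →
    ∀ b ∈ I, bil k (T a) (A b) = if b = a then 1 else 0

/-- `Δ_I(A)`, where `I = {i 0 < i 1 < ⋯ < i (k-1)}` is given by a strictly
monotone enumeration `i : Fin k → ℤ`: the determinant of the `k×k` matrix with
columns `A (i 0), …, A (i (k-1))`. -/
noncomputable def Delta (k : ℕ) (A : ℤ → Fin k → ℂ) (i : Fin k → ℤ) : ℂ :=
  Matrix.det (Matrix.of fun r s : Fin k => A (i s) r)


/-!
The right twist `T a` annihilates the columns of the `a`-minimal basis other than `A a`, and that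
basis is the greedy one: scanning `a, a + 1, …, a + n - 1`, keep `j` exactly when `A j` is not in
the span of the earlier columns. For `a < b < π a`, the column `A a` is not in the span of
`A (a+1), …, A b`, so the exchange lemma forces `A b` into the span of the greedy columns in
`(a, b]`, all of which `T a` annihilates. For the second identity, minimality of `π a` says that
`A (π a)` is not in the span of `A b, …, A (π a - 1)`, so `π a` belongs to the `b`-minimal basis
and `T b` annihilates `A (π a)`.
-/

open Submodule

section Greedy

variable {K V : Type*} [Field K] [AddCommGroup V] [Module K V] {A : ℤ → V} {a b s t : ℤ}

variable (K A) in
open Classical in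
noncomputable def greedyBasis (a t : ℤ) : Finset ℤ :=
  {j ∈ Finset.Ico a t | A j ∉ span K (A '' Set.Ico a j)}

theorem mem_greedyBasis {j : ℤ} :
    j ∈ greedyBasis K A a t ↔ (a ≤ j ∧ j < t) ∧ A j ∉ span K (A '' Set.Ico a j) := by
  simp [greedyBasis]

theorem greedyBasis_eq_empty (h : t ≤ a) : greedyBasis K A a t = ∅ := by
  ext j
  simp only [mem_greedyBasis, Finset.notMem_empty, iff_false]
  omega

theorem greedyBasis_mono (h : s ≤ t) : greedyBasis K A a s ⊆ greedyBasis K A a t := by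
  intro j hj
  rw [mem_greedyBasis] at hj ⊢
  exact ⟨⟨hj.1.1, hj.1.2.trans_le h⟩, hj.2⟩

theorem Int.Ico_add_one_right_eq_insert (h : a ≤ t) : Set.Ico a (t + 1) = insert t (Set.Ico a t) := by
  rw [← Order.succ_eq_add_one, Order.Ico_succ_right_eq_insert h]

theorem greedyBasis_add_one_of_mem_span (ht : A t ∈ span K (A '' Set.Ico a t)) :
    greedyBasis K A a (t + 1) = greedyBasis K A a t := by
  ext j
  simp only [mem_greedyBasis]
  constructor
  · rintro ⟨⟨haj, hjt⟩, hj⟩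
    rcases (Int.lt_add_one_iff.mp hjt).lt_or_eq with hjt | rfl
    · exact ⟨⟨haj, hjt⟩, hj⟩
    · exact absurd ht hj
  · rintro ⟨⟨haj, hjt⟩, hj⟩
    exact ⟨⟨haj, by omega⟩, hj⟩

theorem greedyBasis_add_one_of_notMem_span (hat : a ≤ t) (ht : A t ∉ span K (A '' Set.Ico a t)) :
    greedyBasis K A a (t + 1) = insert t (greedyBasis K A a t) := by
  ext j
  simp only [Finset.mem_insert, mem_greedyBasis]
  constructor
  · rintro ⟨⟨haj, hjt⟩, hj⟩
    rcases (Int.lt_add_one_iff.mp hjt).lt_or_eq with hjt | rfl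
    · exact Or.inr ⟨⟨haj, hjt⟩, hj⟩
    · exact Or.inl rfl
  · rintro (rfl | ⟨⟨haj, hjt⟩, hj⟩)
    · exact ⟨⟨hat, by omega⟩, ht⟩
    · exact ⟨⟨haj, by omega⟩, hj⟩

theorem span_greedyBasis :
    span K (A '' greedyBasis K A a t) = span K (A '' Set.Ico a t) := by
  rcases lt_or_ge t a with hta | hat
  · simp [greedyBasis_eq_empty hta.le, Set.Ico_eq_empty_of_le hta.le]
  induction t, hat using Int.leInduction with
  | base => simp [greedyBasis_eq_empty le_rfl]
  | succ t hat ih =>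
    rw [Int.Ico_add_one_right_eq_insert hat, Set.image_insert_eq, span_insert]
    by_cases ht : A t ∈ span K (A '' Set.Ico a t)
    · rw [greedyBasis_add_one_of_mem_span ht, ih,
        sup_eq_right.mpr ((span_singleton_le_iff_mem _ _).mpr ht)]
    · rw [greedyBasis_add_one_of_notMem_span hat ht, Finset.coe_insert, Set.image_insert_eq,
        span_insert, ih]

theorem linearIndepOn_greedyBasis : LinearIndepOn K A (greedyBasis K A a t : Set ℤ) := by
  rcases lt_or_ge t a with hta | hat
  · simp [greedyBasis_eq_empty hta.le]
  induction t, hat using Int.leInduction with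
  | base => simp [greedyBasis_eq_empty le_rfl]
  | succ t hat ih =>
    by_cases ht : A t ∈ span K (A '' Set.Ico a t)
    · rwa [greedyBasis_add_one_of_mem_span ht]
    · rw [greedyBasis_add_one_of_notMem_span hat ht, Finset.coe_insert]
      exact ih.insert (by rwa [span_greedyBasis])

theorem LinearIndepOn.card_eq_finrank_span {J : Finset ℤ} (hJ : LinearIndepOn K A (J : Set ℤ)) :
    J.card = Module.finrank K (span K (A '' J)) := by
  rw [Set.image_eq_range, finrank_span_eq_card hJ]
  simp

theorem LinearIndepOn.card_le_finrank_span [FiniteDimensional K V] {J : Finset ℤ} {S : Set ℤ}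
    (hJ : LinearIndepOn K A (J : Set ℤ)) (hJS : (J : Set ℤ) ⊆ S) :
    J.card ≤ Module.finrank K (span K (A '' S)) :=
  hJ.card_eq_finrank_span.trans_le (finrank_mono (span_mono (Set.image_mono hJS)))

theorem card_greedyBasis :
    (greedyBasis K A a t).card = Module.finrank K (span K (A '' Set.Ico a t)) := by
  rw [linearIndepOn_greedyBasis.card_eq_finrank_span, span_greedyBasis]

theorem mem_span_greedyBasis_inter_Ioc (hab : a < b) (hbt : b < t)
    (ha : A a ∉ span K (A '' Set.Ioc a b)) :
    A b ∈ span K (A '' (greedyBasis K A a t ∩ Set.Ioc a b)) := by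
  set S := A '' (greedyBasis K A a t ∩ Set.Ioc a b)
  have hb : A b ∈ span K (insert (A a) S) := by
    have hb : A b ∈ span K (A '' greedyBasis K A a (b + 1)) := by
      rw [span_greedyBasis]
      exact subset_span ⟨b, ⟨hab.le, Int.lt_add_one_iff.mpr le_rfl⟩, rfl⟩
    refine span_mono ?_ hb
    rintro _ ⟨j, hj, rfl⟩
    obtain ⟨⟨haj, hjb⟩, -⟩ := mem_greedyBasis.mp hj
    rcases haj.lt_or_eq with haj | rfl
    · exact Or.inr ⟨j, ⟨greedyBasis_mono (by omega) hj, haj, by omega⟩, rfl⟩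
    · exact Or.inl rfl
  by_contra hbS
  refine ha (span_mono ?_ (mem_span_insert_exchange hb hbS))
  rintro _ (rfl | ⟨j, ⟨-, hj⟩, rfl⟩)
  exacts [⟨b, ⟨hab, le_rfl⟩, rfl⟩, ⟨j, hj, rfl⟩]

end Greedy

section Twist

variable {k n : ℕ} {A : ℤ → Fin k → ℂ} {a b : ℤ}

theorem galeLE_of_card_filter_lt {B C : Finset ℤ} (hcard : B.card = C.card)
    (h : ∀ t, (C.filter (· < t)).card ≤ (B.filter (· < t)).card) : galeLE B C := by
  refine ⟨hcard, fun t => ?_⟩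
  have hB := B.card_filter_add_card_filter_not (fun x => t ≤ x)
  have hC := C.card_filter_add_card_filter_not (fun x => t ≤ x)
  simp only [not_le] at hB hC
  have := h t
  omega

theorem span_image_Ico_eq_top (hn : 0 < n) (hper : ColPeriodic k n A) (hrank : FullRank k A)
    (a : ℤ) : span ℂ (A '' Set.Ico a (a + n)) = ⊤ := by
  have hIco : Set.Ico a (a + n) = Set.Ioc (a - 1) (a - 1 + n) := by
    ext j; simp only [Set.mem_Ico, Set.mem_Ioc]; omega
  rw [hIco, Function.Periodic.image_Ioc hper (by exact_mod_cast hn)]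
  exact hrank

theorem isColBasis_greedyBasis (hn : 0 < n) (hper : ColPeriodic k n A) (hrank : FullRank k A)
    (a : ℤ) : IsColBasis k A (greedyBasis ℂ A a (a + n)) := by
  have hspan : span ℂ (A '' greedyBasis ℂ A a (a + n)) = ⊤ := by
    rw [span_greedyBasis, span_image_Ico_eq_top hn hper hrank]
  refine ⟨?_, linearIndepOn_greedyBasis, hspan⟩
  rw [linearIndepOn_greedyBasis.card_eq_finrank_span, hspan, finrank_top, Module.finrank_fin_fun]

theorem isMinBasis_greedyBasis (hn : 0 < n) (hper : ColPeriodic k n A) (hrank : FullRank k A)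
    (a : ℤ) : IsMinBasis k n A a (greedyBasis ℂ A a (a + n)) := by
  have hI := isColBasis_greedyBasis hn hper hrank a
  refine ⟨fun j hj => Finset.mem_Ico.mpr (mem_greedyBasis.mp hj).1, hI, fun J hJsub hJ => ?_⟩
  refine galeLE_of_card_filter_lt (hI.1.trans hJ.1.symm) fun t => ?_
  have hJt : ((J.filter (· < t) : Finset ℤ) : Set ℤ) ⊆ Set.Ico a (min t (a + n)) := by
    intro j hj
    obtain ⟨hjJ, hjt⟩ := Finset.mem_filter.mp hj
    obtain ⟨haj, hjn⟩ := Finset.mem_Ico.mp (hJsub hjJ)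
    exact ⟨haj, lt_min hjt hjn⟩
  have hJindep : LinearIndepOn ℂ A ((J.filter (· < t) : Finset ℤ) : Set ℤ) :=
    LinearIndepOn.mono hJ.2.1 (Finset.coe_subset.mpr (Finset.filter_subset _ _))
  have hgreedy : greedyBasis ℂ A a (min t (a + n)) ⊆ (greedyBasis ℂ A a (a + n)).filter (· < t) :=
    fun j hj => Finset.mem_filter.mpr ⟨greedyBasis_mono (min_le_right _ _) hj,
      (mem_greedyBasis.mp hj).1.2.trans_le (min_le_left _ _)⟩
  calc (J.filter (· < t)).card
      ≤ Module.finrank ℂ (span ℂ (A '' Set.Ico a (min t (a + n)))) :=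
        hJindep.card_le_finrank_span hJt
    _ = (greedyBasis ℂ A a (min t (a + n))).card := card_greedyBasis.symm
    _ ≤ _ := Finset.card_le_card hgreedy

theorem bil_eq_zero_of_mem_span {x y : Fin k → ℂ} {S : Set (Fin k → ℂ)}
    (hS : ∀ s ∈ S, bil k x s = 0) (hy : y ∈ span ℂ S) : bil k x y = 0 := by
  change x ⬝ᵥ y = 0
  induction hy using span_induction with
  | mem s hs => exact hS s hs
  | zero => exact dotProduct_zero x
  | add y z _ _ hy hz => rw [dotProduct_add, hy, hz, add_zero]
  | smul c y _ hy => rw [dotProduct_smul, hy, smul_zero]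

variable {π : ℤ → ℤ}

theorem IsBAP.notMem_span_Ioc (hπ : IsBAP k n A π) {r : ℤ} (har : a ≤ r) (hr : r < π a) :
    A a ∉ span ℂ (A '' Set.Ioc a r) := fun h =>
  (hr.trans_le ((hπ a).2.2.2 r har (by have := (hπ a).2.1; omega) h)).false

theorem IsBAP.apply_mem_greedyBasis (hπ : IsBAP k n A π) (hab : a < b) (hbπ : b < π a) :
    π a ∈ greedyBasis ℂ A b (b + n) := by
  obtain ⟨-, hπn, hspan, -⟩ := hπ a
  refine mem_greedyBasis.mpr ⟨⟨hbπ.le, by omega⟩, fun hπa => ?_⟩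
  refine hπ.notMem_span_Ioc (r := π a - 1) (by omega) (by omega) (span_le.mpr ?_ hspan)
  rintro _ ⟨j, ⟨haj, hjπ⟩, rfl⟩
  rcases hjπ.lt_or_eq with hjπ | rfl
  · exact subset_span ⟨j, ⟨haj, by omega⟩, rfl⟩
  · have hIco : Set.Ico b (π a) ⊆ Set.Ioc a (π a - 1) := fun i ⟨hbi, hij⟩ => ⟨by omega, by omega⟩
    exact span_mono (Set.image_mono hIco) hπa

end Twist

theorem twist_vanishing_general
    (k n : ℕ)
    (A : ℤ → Fin k → ℂ) (hper : ColPeriodic k n A) (hrank : FullRank k A)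
    (π : ℤ → ℤ) (hπ : IsBAP k n A π)
    (T : ℤ → Fin k → ℂ) (hT : IsRightTwist k n A T)
    (a b : ℤ) (hab : a < b) (hbpi : b < π a) :
    bil k (T a) (A b) = 0 ∧ bil k (T b) (A (π a)) = 0 := by
  have hπn := (hπ a).2.1
  have hn : 0 < n := by omega
  have hTmin c := hT c _ (isMinBasis_greedyBasis hn hper hrank c)
  constructor
  · refine bil_eq_zero_of_mem_span ?_ (mem_span_greedyBasis_inter_Ioc (t := a + n) hab (by omega)
      (hπ.notMem_span_Ioc hab.le hbpi))
    rintro _ ⟨c, ⟨hc, hac, -⟩, rfl⟩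
    rw [hTmin a c hc, if_neg hac.ne']
  · rw [hTmin b _ (hπ.apply_mem_greedyBasis hab hbpi), if_neg hbpi.ne']

/-- vanishing identities for the right twist: if
`a < b < π a`, then `⟨τ→(A) a | A b⟩ = 0` and `⟨τ→(A) b | A (π a)⟩ = 0`. -/
theorem twist_vanishing
    (k n : ℕ) (hk : 1 ≤ k) (hkn : k ≤ n)
    (A : ℤ → Fin k → ℂ) (hper : ColPeriodic k n A) (hrank : FullRank k A)
    (π : ℤ → ℤ) (hπ : IsBAP k n A π)
    (T : ℤ → Fin k → ℂ) (hT : IsRightTwist k n A T)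
    (a b : ℤ) (hab : a < b) (hbpi : b < π a) :
    bil k (T a) (A b) = 0 ∧ bil k (T b) (A (π a)) = 0 :=
  twist_vanishing_general k n A hper hrank π hπ T hT a b hab hbpi
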